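/- For a covector field ξ along a curve q(t) with p_j = Γ^i_{jk} q̇^k ξ_i − (Dξ/dt)_j, the time derivative of p satisfies ṗ_j = (R^i_{kjℓ} + ∂_j Γ^i_{kℓ}) q̇^k q̇^ℓ ξ_i − (D²ξ/dt²)_j − Γ^i_{kj} M^{kℓ} ∂_ℓ V ξ_i + Γ^i_{kj} ξ^k ξ_i, provided q satisfies q̈^j + Γ^j_{kℓ} q̇^k q̇^ℓ + M^{jℓ} ∂_ℓ V = ξ^j. -/

import Mathlib

open scoped BigOperators

/-- Partial derivative of a scalar field on `ℝⁿ` in the `i`-th coordinate direction. -/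
noncomputable def pd {n : ℕ} (i : Fin n) (f : (Fin n → ℝ) → ℝ) (q : Fin n → ℝ) : ℝ :=
  fderiv ℝ f q (Pi.single i 1)

/-- Riemann curvature components
`R^j_{ikℓ} = ∂_ℓ Γ^j_{ik} − ∂_k Γ^j_{iℓ} + Γ^p_{ik} Γ^j_{pℓ} − Γ^p_{iℓ} Γ^j_{pk}`. -/
noncomputable def riemann {n : ℕ} (Γ : (Fin n → ℝ) → Fin n → Fin n → Fin n → ℝ)
    (q : Fin n → ℝ) (j i k l : Fin n) : ℝ :=
  pd l (fun q' => Γ q' j i k) q - pd k (fun q' => Γ q' j i l) q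
    + (∑ p, Γ q p i k * Γ q j p l) - ∑ p, Γ q p i l * Γ q j p k

/-- Covariant time derivative along the curve `q` of a covector `η`:
`(Dη/dt)_j = η̇_j − Γ^i_{jk} q̇^k η_i`. -/
noncomputable def covD {n : ℕ} (Γ : (Fin n → ℝ) → Fin n → Fin n → Fin n → ℝ)
    (q η : ℝ → Fin n → ℝ) (t : ℝ) (j : Fin n) : ℝ :=
  deriv (fun s => η s j) t
    - ∑ i, ∑ k, Γ (q t) i j k * deriv (fun s => q s k) t * η t i

lemma contDiff_pd {n : ℕ} (i : Fin n) {f : (Fin n → ℝ) → ℝ} (hf : ContDiff ℝ (⊤ : ℕ∞) f) :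
    ContDiff ℝ (⊤ : ℕ∞) fun q => pd i f q :=
  (hf.fderiv_right (m := (⊤ : ℕ∞)) (by simp)).clm_apply contDiff_const

lemma hasDerivAt_comp_curve {n : ℕ} {f : (Fin n → ℝ) → ℝ} (hf : ContDiff ℝ (⊤ : ℕ∞) f)
    {q : ℝ → Fin n → ℝ} (hq : ∀ i, ContDiff ℝ (⊤ : ℕ∞) fun t => q t i) (t : ℝ) :
    HasDerivAt (fun s => f (q s)) (∑ m, pd m f (q t) * deriv (fun s => q s m) t) t := by
  have hq' : HasDerivAt (fun s => q s) (fun m => deriv (fun s => q s m) t) t :=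
    hasDerivAt_pi.mpr fun m => ((hq m).differentiable (by simp) t).hasDerivAt
  have hF : HasFDerivAt f (fderiv ℝ f (q t)) (q t) :=
    (hf.differentiable (by simp) (q t)).hasFDerivAt
  have h := hF.comp_hasDerivAt t hq'
  convert h using 1
  case e'_4 => rfl
  case e'_5 => rfl
  case e'_8 => rfl
  have hv : (fun m => deriv (fun s => q s m) t) =
      ∑ m : Fin n, (deriv (fun s => q s m) t) • (Pi.single m 1 : Fin n → ℝ) := by
    ext k
    rw [Finset.sum_apply]
    simp [Pi.single_apply]
  rw [hv, map_sum]
  refine Finset.sum_congr rfl fun m _ => ?_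
  rw [map_smul]
  simp [pd, mul_comm]

lemma Gamma_smooth {n : ℕ} {M Minv : (Fin n → ℝ) → Fin n → Fin n → ℝ}
    {Γ : (Fin n → ℝ) → Fin n → Fin n → Fin n → ℝ}
    (hMsmooth : ∀ k l, ContDiff ℝ (⊤ : ℕ∞) fun q => M q k l)
    (hMinvsmooth : ∀ k l, ContDiff ℝ (⊤ : ℕ∞) fun q => Minv q k l)
    (hΓ : ∀ q j i k, Γ q j i k =
      (1 / 2) * ∑ l, Minv q j l *
        (pd i (fun q' => M q' l k) q + pd k (fun q' => M q' l i) q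
          - pd l (fun q' => M q' i k) q))
    (j i k : Fin n) : ContDiff ℝ (⊤ : ℕ∞) fun x => Γ x j i k := by
  have : (fun x => Γ x j i k) = fun x => (1 / 2) * ∑ l, Minv x j l *
        (pd i (fun q' => M q' l k) x + pd k (fun q' => M q' l i) x
          - pd l (fun q' => M q' i k) x) := funext fun x => hΓ x j i k
  rw [this]
  refine contDiff_const.mul (ContDiff.sum fun l _ => (hMinvsmooth j l).mul ?_)
  exact ((contDiff_pd i (hMsmooth l k)).add (contDiff_pd k (hMsmooth l i))).sub
    (contDiff_pd l (hMsmooth i k))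

lemma Gamma_symm {n : ℕ} {M Minv : (Fin n → ℝ) → Fin n → Fin n → ℝ}
    {Γ : (Fin n → ℝ) → Fin n → Fin n → Fin n → ℝ}
    (hMsym : ∀ q k l, M q k l = M q l k)
    (hΓ : ∀ q j i k, Γ q j i k =
      (1 / 2) * ∑ l, Minv q j l *
        (pd i (fun q' => M q' l k) q + pd k (fun q' => M q' l i) q
          - pd l (fun q' => M q' i k) q))
    (x : Fin n → ℝ) (j i k : Fin n) : Γ x j i k = Γ x j k i := by
  rw [hΓ x j i k, hΓ x j k i]
  congr 1
  refine Finset.sum_congr rfl fun l _ => ?_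
  have h1 : (fun q' => M q' i k) = fun q' => M q' k i := funext fun q' => hMsym q' i k
  rw [h1]
  ring

lemma key_alg {n : ℕ} (G : Fin n → Fin n → Fin n → ℝ)
    (D : Fin n → Fin n → Fin n → Fin n → ℝ)
    (v A X X' dV : Fin n → ℝ) (W : Fin n → Fin n → ℝ) (j : Fin n)
    (Gsym : ∀ a b c, G a b c = G a c b)
    (Dsym : ∀ m a b c, D m a b c = D m a c b)
    (hA : ∀ k, A k = (∑ l, W k l * X l) - (∑ a, ∑ b, G k a b * v a * v b)
      - (∑ l, W k l * dV l)) :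
    (∑ i, ∑ k, (((∑ m, D m i j k * v m) * v k + G i j k * A k) * X i
        + G i j k * v k * X' i))
      = (∑ i, ∑ k, ∑ l,
            (D l i k j - D j i k l + (∑ p, G p k j * G i p l)
              - (∑ p, G p k l * G i p j) + D j i k l) * v k * v l * X i)
        + (∑ i, ∑ k, G i j k * v k * (X' i - ∑ a, ∑ b, G a i b * v b * X a))
        - (∑ i, ∑ k, ∑ l, G i k j * W k l * dV l * X i)
        + (∑ i, ∑ k, G i k j * (∑ l, W k l * X l) * X i) := by
  have flat4 : ∀ (F : Fin n → Fin n → Fin n → Fin n → ℝ),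
      (∑ i, ∑ k, ∑ a, ∑ b, F i k a b)
        = ∑ x : Fin n × Fin n × Fin n × Fin n, F x.1 x.2.1 x.2.2.1 x.2.2.2 := by
    intro F; simp [Fintype.sum_prod_type]
  have L : (∑ i, ∑ k, (((∑ m, D m i j k * v m) * v k + G i j k * A k) * X i
        + G i j k * v k * X' i))
      = (∑ i, ∑ k, (∑ m, D m i j k * v m) * v k * X i)
        + (∑ i, ∑ k, G i j k * (∑ l, W k l * X l) * X i)
        - (∑ i, ∑ k, G i j k * (∑ a, ∑ b, G k a b * v a * v b) * X i)
        - (∑ i, ∑ k, G i j k * (∑ l, W k l * dV l) * X i)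
        + (∑ i, ∑ k, G i j k * v k * X' i) := by
    refine Eq.symm ?_
    simp only [← Finset.sum_add_distrib, ← Finset.sum_sub_distrib]
    refine Finset.sum_congr rfl fun i _ => Finset.sum_congr rfl fun k _ => ?_
    rw [hA k]
    ring
  have R1 : (∑ i, ∑ k, ∑ l,
            (D l i k j - D j i k l + (∑ p, G p k j * G i p l)
              - (∑ p, G p k l * G i p j) + D j i k l) * v k * v l * X i)
      = (∑ i, ∑ k, ∑ l, D l i k j * v k * v l * X i)
        + (∑ i, ∑ k, ∑ l, (∑ p, G p k j * G i p l) * v k * v l * X i)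
        - (∑ i, ∑ k, ∑ l, (∑ p, G p k l * G i p j) * v k * v l * X i) := by
    refine Eq.symm ?_
    simp only [← Finset.sum_add_distrib, ← Finset.sum_sub_distrib]
    refine Finset.sum_congr rfl fun i _ => Finset.sum_congr rfl fun k _ =>
      Finset.sum_congr rfl fun l _ => ?_
    ring
  have R2 : (∑ i, ∑ k, G i j k * v k * (X' i - ∑ a, ∑ b, G a i b * v b * X a))
      = (∑ i, ∑ k, G i j k * v k * X' i)
        - (∑ i, ∑ k, G i j k * v k * (∑ a, ∑ b, G a i b * v b * X a)) := by
    refine Eq.symm ?_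
    simp only [← Finset.sum_sub_distrib]
    refine Finset.sum_congr rfl fun i _ => Finset.sum_congr rfl fun k _ => ?_
    ring
  have h1 : (∑ i, ∑ k, (∑ m, D m i j k * v m) * v k * X i)
      = ∑ i, ∑ k, ∑ l, D l i k j * v k * v l * X i := by
    refine Finset.sum_congr rfl fun i _ => Finset.sum_congr rfl fun k _ => ?_
    rw [Finset.sum_mul, Finset.sum_mul]
    refine Finset.sum_congr rfl fun m _ => ?_
    rw [Dsym m i k j]
    ring
  have h2 : (∑ i, ∑ k, G i j k * (∑ l, W k l * X l) * X i)
      = ∑ i, ∑ k, G i k j * (∑ l, W k l * X l) * X i := by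
    refine Finset.sum_congr rfl fun i _ => Finset.sum_congr rfl fun k _ => ?_
    rw [Gsym i j k]
  have h4 : (∑ i, ∑ k, G i j k * (∑ l, W k l * dV l) * X i)
      = ∑ i, ∑ k, ∑ l, G i k j * W k l * dV l * X i := by
    refine Finset.sum_congr rfl fun i _ => Finset.sum_congr rfl fun k _ => ?_
    rw [Finset.mul_sum, Finset.sum_mul]
    refine Finset.sum_congr rfl fun l _ => ?_
    rw [Gsym i j k]
    ring
  have h3 : (∑ i, ∑ k, G i j k * (∑ a, ∑ b, G k a b * v a * v b) * X i)
      = ∑ i, ∑ k, ∑ l, (∑ p, G p k l * G i p j) * v k * v l * X i := by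
    have lhs' : (∑ i, ∑ k, G i j k * (∑ a, ∑ b, G k a b * v a * v b) * X i)
        = ∑ i, ∑ k, ∑ a, ∑ b, G i j k * (G k a b * v a * v b) * X i := by
      refine Finset.sum_congr rfl fun i _ => Finset.sum_congr rfl fun k _ => ?_
      rw [Finset.mul_sum, Finset.sum_mul]
      refine Finset.sum_congr rfl fun a _ => ?_
      rw [Finset.mul_sum, Finset.sum_mul]
    have rhs' : (∑ i, ∑ k, ∑ l, (∑ p, G p k l * G i p j) * v k * v l * X i)
        = ∑ i, ∑ k, ∑ l, ∑ p, G p k l * G i p j * v k * v l * X i := by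
      refine Finset.sum_congr rfl fun i _ => Finset.sum_congr rfl fun k _ =>
        Finset.sum_congr rfl fun l _ => ?_
      rw [Finset.sum_mul, Finset.sum_mul, Finset.sum_mul]
    rw [lhs', rhs', flat4, flat4]
    refine Fintype.sum_equiv ⟨fun x => (x.1, x.2.2.1, x.2.2.2, x.2.1),
      fun x => (x.1, x.2.2.2, x.2.1, x.2.2.1), fun x => rfl, fun x => rfl⟩ _ _ ?_
    rintro ⟨i, k, a, b⟩
    simp only [Equiv.coe_fn_mk]
    rw [Gsym i j k]
    ring
  have h5 : (∑ i, ∑ k, ∑ l, (∑ p, G p k j * G i p l) * v k * v l * X i)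
      = ∑ i, ∑ k, G i j k * v k * (∑ a, ∑ b, G a i b * v b * X a) := by
    have lhs' : (∑ i, ∑ k, ∑ l, (∑ p, G p k j * G i p l) * v k * v l * X i)
        = ∑ i, ∑ k, ∑ l, ∑ p, G p k j * G i p l * v k * v l * X i := by
      refine Finset.sum_congr rfl fun i _ => Finset.sum_congr rfl fun k _ =>
        Finset.sum_congr rfl fun l _ => ?_
      rw [Finset.sum_mul, Finset.sum_mul, Finset.sum_mul]
    have rhs' : (∑ i, ∑ k, G i j k * v k * (∑ a, ∑ b, G a i b * v b * X a))
        = ∑ i, ∑ k, ∑ a, ∑ b, G i j k * v k * (G a i b * v b * X a) := by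
      refine Finset.sum_congr rfl fun i _ => Finset.sum_congr rfl fun k _ => ?_
      rw [Finset.mul_sum]
      refine Finset.sum_congr rfl fun a _ => ?_
      rw [Finset.mul_sum]
    rw [lhs', rhs', flat4, flat4]
    refine Fintype.sum_equiv ⟨fun x => (x.2.2.2, x.2.1, x.1, x.2.2.1),
      fun x => (x.2.2.1, x.2.1, x.2.2.2, x.1), fun x => rfl, fun x => rfl⟩ _ _ ?_
    rintro ⟨i, k, l, p⟩
    simp only [Equiv.coe_fn_mk]
    rw [Gsym p k j]
    ring
  rw [L, R1, R2, h1, h2, h3, h4, h5]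
  ring

/-- Time derivative of the costate `p_j = Γ^i_{jk} q̇^k ξ_i − (Dξ/dt)_j` along the
controlled dynamics:
`ṗ_j = (R^i_{kjℓ} + ∂_j Γ^i_{kℓ}) q̇^k q̇^ℓ ξ_i − (D²ξ/dt²)_j
        − Γ^i_{kj} M^{kℓ} ∂_ℓ V ξ_i + Γ^i_{kj} ξ^k ξ_i`. -/
theorem costate_time_derivative {n : ℕ}
    (M Minv : (Fin n → ℝ) → Fin n → Fin n → ℝ)
    (Γ : (Fin n → ℝ) → Fin n → Fin n → Fin n → ℝ)
    (V : (Fin n → ℝ) → ℝ)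
    (hMsmooth : ∀ k l, ContDiff ℝ (⊤ : ℕ∞) fun q => M q k l)
    (hMinvsmooth : ∀ k l, ContDiff ℝ (⊤ : ℕ∞) fun q => Minv q k l)
    (hMsym : ∀ q k l, M q k l = M q l k)
    (hMpos : ∀ (q : Fin n → ℝ) (v : Fin n → ℝ), v ≠ 0 →
      0 < ∑ k, ∑ l, M q k l * v k * v l)
    (hInv : ∀ q i l, (∑ j, M q i j * Minv q j l) = if i = l then 1 else 0)
    (hΓ : ∀ q j i k, Γ q j i k =
      (1 / 2) * ∑ l, Minv q j l *
        (pd i (fun q' => M q' l k) q + pd k (fun q' => M q' l i) q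
          - pd l (fun q' => M q' i k) q))
    (hV : ContDiff ℝ (⊤ : ℕ∞) V)
    (q ξ p : ℝ → Fin n → ℝ)
    (hq : ∀ i, ContDiff ℝ (⊤ : ℕ∞) fun t => q t i)
    (hξ : ∀ i, ContDiff ℝ (⊤ : ℕ∞) fun t => ξ t i)
    -- costate in covariant form:  p_j = Γ^i_{jk} q̇^k ξ_i − (Dξ/dt)_j
    (hp : ∀ t j, p t j =
      (∑ i, ∑ k, Γ (q t) i j k * deriv (fun r => q r k) t * ξ t i)
        - covD Γ q ξ t j)
    -- controlled dynamics:  q̈^j + Γ^j_{kℓ} q̇^k q̇^ℓ + M^{jℓ} ∂_ℓ V = ξ^j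
    (hdyn : ∀ t j,
      deriv (fun s => deriv (fun r => q r j) s) t
        + (∑ k, ∑ l, Γ (q t) j k l * deriv (fun r => q r k) t * deriv (fun r => q r l) t)
        + (∑ l, Minv (q t) j l * pd l V (q t))
        = ∑ l, Minv (q t) j l * ξ t l)
    (t : ℝ) (j : Fin n) :
    deriv (fun s => p s j) t =
      (∑ i, ∑ k, ∑ l,
          (riemann Γ (q t) i k j l + pd j (fun q' => Γ q' i k l) (q t))
            * deriv (fun r => q r k) t * deriv (fun r => q r l) t * ξ t i)
        - covD Γ q (fun s => covD Γ q ξ s) t j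
        - (∑ i, ∑ k, ∑ l, Γ (q t) i k j * Minv (q t) k l * pd l V (q t) * ξ t i)
        + ∑ i, ∑ k, Γ (q t) i k j * (∑ l, Minv (q t) k l * ξ t l) * ξ t i := by
  have hΓs : ∀ a b c, ContDiff ℝ (⊤ : ℕ∞) fun x => Γ x a b c :=
    Gamma_smooth hMsmooth hMinvsmooth hΓ
  have hΓsym : ∀ (x : Fin n → ℝ) (a b c : Fin n), Γ x a b c = Γ x a c b :=
    Gamma_symm hMsym hΓ
  have hqd : ∀ k, Differentiable ℝ (deriv (fun r => q r k)) := fun k =>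
    ((contDiff_infty_iff_deriv.mp ((hq k).of_le (by simp))).2).differentiable (by norm_num)
  have hξd : ∀ i, Differentiable ℝ (deriv (fun r => ξ r i)) := fun i =>
    ((contDiff_infty_iff_deriv.mp ((hξ i).of_le (by simp))).2).differentiable (by norm_num)
  -- derivative of the main sum F
  have hF : HasDerivAt (fun s => ∑ i, ∑ k, Γ (q s) i j k * deriv (fun r => q r k) s * ξ s i)
      (∑ i, ∑ k, (((∑ m, pd m (fun x => Γ x i j k) (q t) * deriv (fun r => q r m) t)
            * deriv (fun r => q r k) t
          + Γ (q t) i j k * deriv (fun s => deriv (fun r => q r k) s) t) * ξ t i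
        + Γ (q t) i j k * deriv (fun r => q r k) t * deriv (fun r => ξ r i) t)) t := by
    refine HasDerivAt.fun_sum fun i _ => HasDerivAt.fun_sum fun k _ => ?_
    exact ((hasDerivAt_comp_curve (hΓs i j k) hq t).mul
        ((hqd k t).hasDerivAt)).mul
      (((hξ i).differentiable (by simp) t).hasDerivAt)
  have hXdd : HasDerivAt (fun s => deriv (fun r => ξ r j) s)
      (deriv (fun s => deriv (fun r => ξ r j) s) t) t :=
    (hξd j t).hasDerivAt
  -- derivative of p
  have hpf : (fun s => p s j) = fun s =>
      (∑ i, ∑ k, Γ (q s) i j k * deriv (fun r => q r k) s * ξ s i)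
        - (deriv (fun r => ξ r j) s
            - ∑ i, ∑ k, Γ (q s) i j k * deriv (fun r => q r k) s * ξ s i) := by
    funext s
    rw [hp s j]
    simp only [covD]
  have hdp : deriv (fun s => p s j) t =
      (∑ i, ∑ k, (((∑ m, pd m (fun x => Γ x i j k) (q t) * deriv (fun r => q r m) t)
            * deriv (fun r => q r k) t
          + Γ (q t) i j k * deriv (fun s => deriv (fun r => q r k) s) t) * ξ t i
        + Γ (q t) i j k * deriv (fun r => q r k) t * deriv (fun r => ξ r i) t))
      - (deriv (fun s => deriv (fun r => ξ r j) s) t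
        - (∑ i, ∑ k, (((∑ m, pd m (fun x => Γ x i j k) (q t) * deriv (fun r => q r m) t)
            * deriv (fun r => q r k) t
          + Γ (q t) i j k * deriv (fun s => deriv (fun r => q r k) s) t) * ξ t i
        + Γ (q t) i j k * deriv (fun r => q r k) t * deriv (fun r => ξ r i) t))) := by
    rw [hpf]
    exact (hF.sub (hXdd.sub hF)).deriv
  have hcd : deriv (fun s => deriv (fun r => ξ r j) s
        - ∑ i, ∑ k, Γ (q s) i j k * deriv (fun r => q r k) s * ξ s i) t =
      deriv (fun s => deriv (fun r => ξ r j) s) t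
      - (∑ i, ∑ k, (((∑ m, pd m (fun x => Γ x i j k) (q t) * deriv (fun r => q r m) t)
            * deriv (fun r => q r k) t
          + Γ (q t) i j k * deriv (fun s => deriv (fun r => q r k) s) t) * ξ t i
        + Γ (q t) i j k * deriv (fun r => q r k) t * deriv (fun r => ξ r i) t)) :=
    (hXdd.sub hF).deriv
  have hA' : ∀ k, deriv (fun s => deriv (fun r => q r k) s) t =
      (∑ l, Minv (q t) k l * ξ t l)
        - (∑ a, ∑ b, Γ (q t) k a b * deriv (fun r => q r a) t * deriv (fun r => q r b) t)
        - (∑ l, Minv (q t) k l * pd l V (q t)) := by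
    intro k
    have h := hdyn t k
    linarith [h]
  have hk := key_alg (Γ (q t))
    (fun m a b c => pd m (fun x => Γ x a b c) (q t))
    (fun k => deriv (fun r => q r k) t)
    (fun k => deriv (fun s => deriv (fun r => q r k) s) t)
    (ξ t)
    (fun i => deriv (fun r => ξ r i) t)
    (fun l => pd l V (q t))
    (Minv (q t)) j
    (fun a b c => hΓsym (q t) a b c)
    (fun m a b c => by
      have : (fun x => Γ x a b c) = fun x => Γ x a c b := funext fun x => hΓsym x a b c
      simp only [this])
    hA'
  rw [hdp]
  simp only [covD, riemann]
  rw [hcd]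
  linarith [hk]
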